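/- Fix d ≥ 2 and an integer r with r ∉ {1,2,4}. Every Markov cocycle M on X_r (not assumed shift-invariant) is the Gibbs cocycle of some nearest neighbor interaction φ (not necessarily shift-invariant): M = M_φ. In the notation of the paper, M_{X_r} = G_{X_r}. -/

import Mathlib

open scoped BigOperators

/-- Sites of the standard Cayley graph of `ℤ^d`. -/
abbrev Site (d : ℕ) := Fin d → ℤ

/-- Adjacency in the standard Cayley graph of `ℤ^d`: `‖n - m‖₁ = 1`. -/
def adjacent {d : ℕ} (n m : Site d) : Prop :=
  (∑ i, |n i - m i|) = 1

/-- The (outer) boundary of a set of sites. -/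
def siteBdry {d : ℕ} (F : Set (Site d)) : Set (Site d) :=
  {m | m ∉ F ∧ ∃ n ∈ F, adjacent n m}

/-- The shift action of `ℤ^d` on configurations. -/
def shift {d : ℕ} {A : Type*} (n : Site d) (x : Site d → A) : Site d → A :=
  fun m => x (m + n)

/-- The nearest neighbor shift of finite type `X_r`. -/
def Xr (d r : ℕ) : Set (Site d → ZMod r) :=
  {x | ∀ n m : Site d, adjacent n m → x n - x m = 1 ∨ x n - x m = -1}

/-- A height function on `ℤ^d`. -/
def IsHeightFn {d : ℕ} (h : Site d → ℤ) : Prop :=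
  ∀ n m : Site d, adjacent n m → |h n - h m| = 1

/-- `h` is a height-function lift of the configuration `x ∈ (ℤ/rℤ)^{ℤ^d}`. -/
def LiftsTo {d r : ℕ} (h : Site d → ℤ) (x : Site d → ZMod r) : Prop :=
  IsHeightFn h ∧ ∀ n : Site d, ((h n : ZMod r)) = x n

/-- The homoclinic relation of `X`. -/
def DeltaOf {d : ℕ} {A : Type*} (X : Set (Site d → A)) :
    Set ((Site d → A) × (Site d → A)) :=
  {p | p.1 ∈ X ∧ p.2 ∈ X ∧ {n | p.1 n ≠ p.2 n}.Finite}

/-- The cocycle condition for a function on the homoclinic relation. -/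
def IsCocycle {d : ℕ} {A : Type*} (X : Set (Site d → A)) (M : ↥(DeltaOf X) → ℝ) : Prop :=
  ∀ (x y z : Site d → A) (hxy : (x, y) ∈ DeltaOf X)
    (hyz : (y, z) ∈ DeltaOf X) (hxz : (x, z) ∈ DeltaOf X),
    M ⟨(x, z), hxz⟩ = M ⟨(x, y), hxy⟩ + M ⟨(y, z), hyz⟩

/-- The Markov condition: if `x,y` agree outside the finite set `F`, then `M(x,y)` depends
only on the restrictions of `x` and `y` to `F ∪ ∂F`. -/
def IsMarkovProp {d : ℕ} {A : Type*} (X : Set (Site d → A)) (M : ↥(DeltaOf X) → ℝ) : Prop :=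
  ∀ (x y x' y' : Site d → A) (hxy : (x, y) ∈ DeltaOf X) (hxy' : (x', y') ∈ DeltaOf X)
    (F : Set (Site d)), F.Finite →
    (∀ n ∉ F, x n = y n) → (∀ n ∉ F, x' n = y' n) →
    (∀ n ∈ F ∪ siteBdry F, x n = x' n) → (∀ n ∈ F ∪ siteBdry F, y n = y' n) →
    M ⟨(x, y), hxy⟩ = M ⟨(x', y'), hxy'⟩

/-- Shift-invariance of a cocycle on the homoclinic relation. -/
def IsShiftInvCocycle {d : ℕ} {A : Type*} (X : Set (Site d → A)) (M : ↥(DeltaOf X) → ℝ) : Prop :=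
  ∀ (n : Site d) (x y : Site d → A) (hxy : (x, y) ∈ DeltaOf X)
    (hs : (shift n x, shift n y) ∈ DeltaOf X),
    M ⟨(shift n x, shift n y), hs⟩ = M ⟨(x, y), hxy⟩

/-- `N_i(a,b)`: the net number of crossings from `i + rℤ` to `i + 2 + rℤ` of a path from
`a` to `b` in steps of size `2`. -/
noncomputable def NiCount (r : ℕ) (i : ℤ) (a b : ℤ) : ℤ :=
  if a ≤ b then
    (((Finset.Ico a b).filter fun m => (m - a) % 2 = 0 ∧ (m - i) % (r : ℤ) = 0).card : ℤ)
  else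
    -(((Finset.Ico b a).filter fun m => (m - b) % 2 = 0 ∧ (m - i) % (r : ℤ) = 0).card : ℤ)

/-- The standard generator `e_j` of `ℤ^d`. -/
def unitVec {d : ℕ} (j : Fin d) : Site d := Pi.single j 1

/-- The Gibbs cocycle `M_φ(x,y)` of a (not necessarily shift-invariant) nearest neighbor
interaction `φ`, given by vertex weights `fv n a` (at site `n`) and edge weights
`fe n j a b` (on the edge `(n, n + e_j)` with values `a` at `n` and `b` at `n + e_j`). -/
noncomputable def gibbsDiff {d r : ℕ} (fv : Site d → ZMod r → ℝ)
    (fe : Site d → Fin d → ZMod r → ZMod r → ℝ)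
    (x y : Site d → ZMod r) : ℝ :=
  (∑ᶠ n : Site d, (fv n (y n) - fv n (x n))) +
  ∑ᶠ n : Site d, ∑ j : Fin d,
    (fe n j (y n) (y (n + unitVec j)) - fe n j (x n) (x (n + unitVec j)))


/-!
For `r ∉ {1, 2, 4}` every `x ∈ X_r` lifts to a height function `h : ℤ^d → ℤ` with
`|∇h| = 1`: the increments `±1` of `x` close up around every plaquette, because four signs
summing to a multiple of `r` must sum to `0`. For `d ≥ 2` the complement of a box is connected,
so homoclinic `x, y` have lifts `h, g` that differ at finitely many sites, and `g` is turned into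
`h` by finitely many flips, each lowering a strict local maximum by `2`. Hence a cocycle on
`Δ_{X_r}` is determined by its values on flips, which by the Markov property depend only on the
site and the height there. An interaction on the edges of a single direction realises any such
data: flip values telescope along lines into edge weights.
-/

section

variable {d r : ℕ}

theorem adjacent_comm {n m : Site d} : adjacent n m ↔ adjacent m n := by
  simp only [adjacent, abs_sub_comm (n _)]

theorem not_adjacent_self (n : Site d) : ¬ adjacent n n := by
  simp [adjacent]

theorem adjacent_add_unitVec (n : Site d) (k : Fin d) : adjacent n (n + unitVec k) := by
  simp [adjacent, unitVec, Pi.single_apply, apply_ite]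

theorem exists_eq_add_unitVec_of_adjacent {n m : Site d} (h : adjacent n m) :
    ∃ k, m = n + unitVec k ∨ n = m + unitVec k := by
  rw [adjacent] at h
  obtain ⟨k, -, hk⟩ := Finset.exists_ne_zero_of_sum_ne_zero (h.trans_ne one_ne_zero)
  have hk1 : |n k - m k| = 1 := by
    have := Finset.single_le_sum (fun i _ => abs_nonneg (n i - m i)) (Finset.mem_univ k)
    have := abs_nonneg (n k - m k)
    omega
  have hrest : ∀ i ≠ k, n i = m i := by
    intro i hi
    have := Finset.add_sum_erase _ (fun i => |n i - m i|) (Finset.mem_univ k)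
    rw [hk1, h, add_eq_left, Finset.sum_eq_zero_iff_of_nonneg
      (fun _ _ => abs_nonneg _)] at this
    simpa [sub_eq_zero] using this i (Finset.mem_erase.2 ⟨hi, Finset.mem_univ i⟩)
  refine ⟨k, ?_⟩
  rcases abs_eq (zero_le_one' ℤ) |>.1 hk1 with hk' | hk'
  · right; ext i; rcases eq_or_ne i k with rfl | hi <;> simp [unitVec, *]; omega
  · left; ext i; rcases eq_or_ne i k with rfl | hi <;> simp [unitVec, *]; omega

theorem sum_add_unitVec (n : Site d) (k : Fin d) : ∑ i, (n + unitVec k) i = ∑ i, n i + 1 := by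
  simp [Finset.sum_add_distrib, unitVec]

theorem isHeightFn_iff {h : Site d → ℤ} :
    IsHeightFn h ↔ ∀ n k, |h (n + unitVec k) - h n| = 1 := by
  refine ⟨fun hh n k => hh _ _ (adjacent_comm.1 (adjacent_add_unitVec n k)),
    fun hh n m hnm => ?_⟩
  obtain ⟨k, rfl | rfl⟩ := exists_eq_add_unitVec_of_adjacent hnm
  · rw [abs_sub_comm]; exact hh n k
  · exact hh m k

theorem IsHeightFn.sub_eq {h : Site d → ℤ} (hh : IsHeightFn h) {n m : Site d}
    (hnm : adjacent n m) : h n - h m = 1 ∨ h n - h m = -1 :=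
  abs_eq zero_le_one |>.1 (hh n m hnm)

theorem IsHeightFn.add_const {h : Site d → ℤ} (hh : IsHeightFn h) (c : ℤ) :
    IsHeightFn (fun n => h n + c) := by
  intro n m hnm
  simpa using hh n m hnm

theorem IsHeightFn.intCast_mem_Xr {h : Site d → ℤ} (hh : IsHeightFn h) :
    (Int.cast ∘ h : Site d → ZMod r) ∈ Xr d r := by
  intro n m hnm
  rcases hh.sub_eq hnm with e | e <;> simp [← Int.cast_sub, e]

theorem LiftsTo.intCast_comp {h : Site d → ℤ} {x : Site d → ZMod r} (hh : LiftsTo h x) :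
    (Int.cast ∘ h : Site d → ZMod r) = x :=
  funext hh.2

theorem apply_eq_apply_of_add_unitVec {A : Type*} {f : Site d → A}
    (hf : ∀ n k, f (n + unitVec k) = f n) (n m : Site d) : f n = f m := by
  let periods : AddSubgroup (Site d) :=
    { carrier := {v | ∀ n, f (n + v) = f n}
      add_mem' := fun {u v} hu hv n => by rw [← add_assoc, hv, hu]
      zero_mem' := fun n => by rw [add_zero]
      neg_mem' := fun {v} hv n => by rw [← hv (n + -v), neg_add_cancel_right] }
  have hperiod : ∀ v, v ∈ periods := by
    intro v
    rw [← Finset.univ_sum_single v]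
    refine AddSubgroup.sum_mem _ fun i _ => ?_
    have : Pi.single i (v i) = v i • unitVec i := by
      ext j; rcases eq_or_ne j i with rfl | hj <;> simp [unitVec, *]
    exact this ▸ AddSubgroup.zsmul_mem _ (show unitVec i ∈ periods from (hf · i)) _
  rw [← zero_add n, ← zero_add m, hperiod n 0, hperiod m 0]

theorem apply_eq_apply_of_add_unitVec_of_notMem_Icc (hd : 2 ≤ d) {A : Type*} {f : Site d → A}
    {a b : Site d}
    (hf : ∀ n k, n ∉ Set.Icc a b → n + unitVec k ∉ Set.Icc a b → f (n + unitVec k) = f n)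
    {n m : Site d} (hn : n ∉ Set.Icc a b) (hm : m ∉ Set.Icc a b) : f n = f m := by
  have : Nontrivial (Fin d) := Fin.nontrivial_iff_two_le.2 hd
  have hout : ∀ {p : Site d} {i : Fin d}, p i ∉ Set.Icc (a i) (b i) → p ∉ Set.Icc a b :=
    fun hp hab => hp ⟨hab.1 _, hab.2 _⟩
  -- Freezing one coordinate outside the box leaves a function invariant under every unit step.
  have hslice : ∀ i t, t ∉ Set.Icc (a i) (b i) → ∀ p q : Site d,
      f (Function.update p i t) = f (Function.update q i t) := by
    intro i t ht
    refine apply_eq_apply_of_add_unitVec fun p k => ?_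
    rcases eq_or_ne k i with rfl | hki
    · congr 1; ext j; rcases eq_or_ne j k with rfl | hj <;> simp [unitVec, *]
    · have hstep : Function.update (p + unitVec k) i t = Function.update p i t + unitVec k := by
        ext j; rcases eq_or_ne j i with rfl | hj <;> simp [unitVec, Pi.single_apply, *]
      rw [hstep]
      exact hf _ _ (hout (i := i) (by simpa using ht))
        (hout (i := i) (by simpa [unitVec, Pi.single_apply, hki.symm] using ht))
  have hfar : ∀ p, p ∉ Set.Icc a b → f p = f (b + 1) := by
    intro p hp
    obtain ⟨i, hi⟩ : ∃ i, p i ∉ Set.Icc (a i) (b i) := by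
      by_contra! h
      exact hp ⟨fun i => (h i).1, fun i => (h i).2⟩
    obtain ⟨j, hji⟩ := exists_ne i
    have hbj : (b + 1) j ∉ Set.Icc (a j) (b j) := by simp
    calc f p = f (Function.update (b + 1) i (p i)) := by
          simpa using hslice i (p i) hi p (b + 1)
      _ = f (Function.update (Function.update (b + 1) i (p i)) j ((b + 1) j)) := by
          rw [Function.update_eq_self_iff.2 (Function.update_of_ne hji _ _).symm]
      _ = f (b + 1) := by
          rw [hslice j _ hbj _ (b + 1), Function.update_eq_self]
  rw [hfar n hn, hfar m hm]

section Potential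

variable {G : Type*} [AddCommGroup G]

noncomputable def intPrimitive (f : ℤ → G) (t : ℤ) : G :=
  ∑ s ∈ Finset.Ico 0 t, f s - ∑ s ∈ Finset.Ico t 0, f s

theorem intPrimitive_add_one (f : ℤ → G) (t : ℤ) :
    intPrimitive f (t + 1) = intPrimitive f t + f t := by
  unfold intPrimitive
  rcases le_or_gt 0 t with ht | ht
  · rw [← Finset.insert_Ico_right_eq_Ico_add_one ht, Finset.sum_insert (by simp),
      Finset.Ico_eq_empty_of_le ht, Finset.Ico_eq_empty_of_le (by omega : (0 : ℤ) ≤ t + 1)]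
    abel
  · rw [← Finset.insert_Ico_add_one_left_eq_Ico ht, Finset.sum_insert (by simp),
      Finset.Ico_eq_empty_of_le ht.le, Finset.Ico_eq_empty_of_le (by omega : t + 1 ≤ 0)]
    abel

noncomputable def linePrimitive (j : Fin d) (δ : Site d → G) (n : Site d) : G :=
  intPrimitive (fun t => δ (Function.update n j t)) (n j)

theorem linePrimitive_add_unitVec_self (j : Fin d) (δ : Site d → G) (n : Site d) :
    linePrimitive j δ (n + unitVec j) = linePrimitive j δ n + δ n := by
  have hline : ∀ t, Function.update (n + unitVec j) j t = Function.update n j t := by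
    intro t; ext i; rcases eq_or_ne i j with rfl | hi <;> simp [unitVec, *]
  simp only [linePrimitive, hline]
  rw [show (n + unitVec j) j = n j + 1 by simp [unitVec], intPrimitive_add_one,
    Function.update_eq_self]

theorem linePrimitive_add_unitVec_of_ne {j k : Fin d} (hkj : k ≠ j) {δ : Site d → G}
    (hδ : ∀ m, δ (m + unitVec k) = δ m) (n : Site d) :
    linePrimitive j δ (n + unitVec k) = linePrimitive j δ n := by
  have hline : ∀ t, Function.update (n + unitVec k) j t = Function.update n j t + unitVec k := by
    intro t; ext i; rcases eq_or_ne i j with rfl | hi <;> simp [unitVec, Pi.single_apply, *]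
  simp only [linePrimitive, hline, hδ]
  rw [show (n + unitVec k) j = n j by simp [unitVec, hkj.symm]]

/-- Discrete Poincaré lemma on `ℤ^d`: a closed `G`-valued 1-form is exact. -/
theorem exists_potential (ε : Fin d → Site d → G)
    (hε : ∀ j k n, ε j n + ε k (n + unitVec j) = ε k n + ε j (n + unitVec k)) :
    ∃ h : Site d → G, ∀ n k, h (n + unitVec k) = h n + ε k n := by
  suffices ∀ s : Finset (Fin d), ∃ h : Site d → G,
      ∀ n, ∀ k ∈ s, h (n + unitVec k) = h n + ε k n by
    simpa using this Finset.univ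
  intro s
  induction s using Finset.induction_on with
  | empty => exact ⟨0, by simp⟩
  | insert j s hj ih =>
    obtain ⟨h, hh⟩ := ih
    set δ : Site d → G := fun n => ε j n - (h (n + unitVec j) - h n)
    have hδ : ∀ k ∈ s, ∀ m, δ (m + unitVec k) = δ m := by
      intro k hk m
      have := hε j k m
      simp only [δ, add_right_comm m (unitVec k), hh _ k hk]
      linear_combination (norm := abel) -this
    refine ⟨h + linePrimitive j δ, fun n k hk => ?_⟩
    rcases Finset.mem_insert.1 hk with rfl | hk
    · simp only [Pi.add_apply, linePrimitive_add_unitVec_self, δ]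
      abel
    · simp only [Pi.add_apply, hh n k hk,
        linePrimitive_add_unitVec_of_ne (ne_of_mem_of_not_mem hk hj) (hδ k hk)]
      abel

end Potential

theorem eq_of_intCast_eq (hr3 : 3 ≤ r) {a b : ℤ} (ha : |a| = 1) (hb : |b| = 1)
    (hab : (a : ZMod r) = b) : a = b := by
  have hdvd := (ZMod.intCast_eq_intCast_iff_dvd_sub a b r).1 hab
  rw [abs_eq zero_le_one] at ha hb
  have := Int.eq_zero_of_abs_lt_dvd hdvd (abs_lt.2 ⟨by omega, by omega⟩)
  omega

theorem add_eq_add_of_intCast_eq (hr3 : 3 ≤ r) (hr4 : r ≠ 4) {a b c e : ℤ} (ha : |a| = 1)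
    (hb : |b| = 1) (hc : |c| = 1) (he : |e| = 1)
    (h : ((a + b : ℤ) : ZMod r) = ((c + e : ℤ) : ZMod r)) : a + b = c + e := by
  have hdvd := (ZMod.intCast_eq_intCast_iff_dvd_sub _ _ r).1 h
  rw [abs_eq zero_le_one] at ha hb hc he
  obtain rfl | hr5 : r = 3 ∨ 5 ≤ r := by omega
  · push_cast at hdvd; omega
  · have := Int.eq_zero_of_abs_lt_dvd hdvd (abs_lt.2 ⟨by omega, by omega⟩)
    omega

theorem exists_liftsTo (hr3 : 3 ≤ r) (hr4 : r ≠ 4) {x : Site d → ZMod r} (hx : x ∈ Xr d r) :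
    ∃ h, LiftsTo h x := by
  have hstep : ∀ k n, ∃ e : ℤ, |e| = 1 ∧ (e : ZMod r) = x (n + unitVec k) - x n := by
    intro k n
    rcases hx _ _ (adjacent_comm.1 (adjacent_add_unitVec n k)) with e | e
    exacts [⟨1, by simp, by simp [e]⟩, ⟨-1, by simp, by simp [e]⟩]
  choose ε hε_abs hε_cast using hstep
  obtain ⟨h, hh⟩ := exists_potential ε fun j k n =>
    add_eq_add_of_intCast_eq hr3 hr4 (hε_abs _ _) (hε_abs _ _) (hε_abs _ _) (hε_abs _ _)
      (by push_cast [hε_cast, add_right_comm n (unitVec j)]; ring)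
  have hconst : ∀ n, x n - (h n : ZMod r) = x 0 - (h 0 : ZMod r) := fun n =>
    apply_eq_apply_of_add_unitVec (f := fun n => x n - (h n : ZMod r))
      (fun n k => by simp only [hh, Int.cast_add, hε_cast]; ring) n 0
  obtain ⟨c, hc⟩ := ZMod.intCast_surjective (x 0 - (h 0 : ZMod r))
  refine ⟨fun n => h n + c, (isHeightFn_iff.2 fun n k => ?_).add_const c, fun n => ?_⟩
  · simp [hh, hε_abs]
  · push_cast
    rw [hc, ← hconst n]
    ring

theorem LiftsTo.exists_liftsTo_of_mem_deltaOf (hd : 2 ≤ d) (hr3 : 3 ≤ r) (hr4 : r ≠ 4)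
    {x y : Site d → ZMod r} (hxy : (x, y) ∈ DeltaOf (Xr d r)) {h : Site d → ℤ}
    (hh : LiftsTo h x) : ∃ g, LiftsTo g y ∧ {n | h n ≠ g n}.Finite := by
  obtain ⟨g, hg⟩ := exists_liftsTo hr3 hr4 hxy.2.1
  obtain ⟨a, ha⟩ := hxy.2.2.bddBelow
  obtain ⟨b, hb⟩ := hxy.2.2.bddAbove
  have hxy_out : ∀ n ∉ Set.Icc a b, x n = y n := fun n hn =>
    by_contra fun hne => hn ⟨ha hne, hb hne⟩
  have hq : b + 1 ∉ Set.Icc a b := fun hq => by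
    have := hq.2 ⟨0, by omega⟩
    simp at this
  have hconst : ∀ n ∉ Set.Icc a b, g n - h n = g (b + 1) - h (b + 1) := by
    intro n hn
    refine apply_eq_apply_of_add_unitVec_of_notMem_Icc hd (f := fun n => g n - h n)
      (fun n k hn hnk => ?_) hn hq
    have hadj := adjacent_comm.1 (adjacent_add_unitVec n k)
    have := eq_of_intCast_eq hr3 (hh.1 _ _ hadj) (hg.1 _ _ hadj)
      (by push_cast [hh.2, hg.2, hxy_out _ hn, hxy_out _ hnk]; rfl)
    linarith
  refine ⟨fun n => g n + (h (b + 1) - g (b + 1)), ⟨hg.1.add_const _, fun n => ?_⟩,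
    (Set.finite_Icc a b).subset fun n hn => ?_⟩
  · push_cast
    rw [hg.2, hg.2, hh.2, hxy_out _ hq]
    ring
  · by_contra hn'
    have := hconst n hn'
    exact hn (by simp only; omega)

section Cocycle

variable {A : Type*} {X : Set (Site d → A)} {C : ↥(DeltaOf X) → ℝ}

theorem swap_mem_deltaOf {x y : Site d → A} (hxy : (x, y) ∈ DeltaOf X) :
    (y, x) ∈ DeltaOf X :=
  ⟨hxy.2.1, hxy.1, by simpa only [ne_comm] using hxy.2.2⟩

theorem IsCocycle.apply_self (hC : IsCocycle X C) {x : Site d → A} (hxx : (x, x) ∈ DeltaOf X) :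
    C ⟨(x, x), hxx⟩ = 0 := by
  linarith [hC x x x hxx hxx hxx]

theorem IsCocycle.apply_swap (hC : IsCocycle X C) {x y : Site d → A}
    (hxy : (x, y) ∈ DeltaOf X) : C ⟨(y, x), swap_mem_deltaOf hxy⟩ = -C ⟨(x, y), hxy⟩ := by
  linarith [hC x y x hxy (swap_mem_deltaOf hxy) ⟨hxy.1, hxy.1, by simp⟩,
    hC.apply_self ⟨hxy.1, hxy.1, by simp⟩]

theorem IsCocycle.sub {C' : ↥(DeltaOf X) → ℝ} (hC : IsCocycle X C) (hC' : IsCocycle X C') :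
    IsCocycle X (C - C') := by
  intro x y z hxy hyz hxz
  simp only [Pi.sub_apply, hC x y z hxy hyz hxz, hC' x y z hxy hyz hxz]
  ring

end Cocycle

def IsFlipAt {R : Type*} [Ring R] (n : Site d) (w w' : Site d → R) : Prop :=
  (∀ m, adjacent n m → w m = w n - 1) ∧ w' = Function.update w n (w n - 2)

theorem IsFlipAt.isHeightFn {n : Site d} {g g' : Site d → ℤ} (hf : IsFlipAt n g g')
    (hg : IsHeightFn g) : IsHeightFn g' := by
  obtain ⟨hnb, rfl⟩ := hf
  intro p q hpq
  by_cases hp : p = n <;> by_cases hq : q = n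
  · subst hp hq; exact absurd hpq (not_adjacent_self _)
  · subst hp; simp [hq, hnb q hpq]
  · subst hq; simp [hp, hnb p (adjacent_comm.1 hpq)]
  · simpa [hp, hq] using hg p q hpq

theorem IsFlipAt.intCast {R : Type*} [Ring R] {n : Site d} {g g' : Site d → ℤ}
    (hf : IsFlipAt n g g') : IsFlipAt n (Int.cast ∘ g : Site d → R) (Int.cast ∘ g') := by
  obtain ⟨hnb, rfl⟩ := hf
  refine ⟨fun m hm => by simp [hnb m hm], ?_⟩
  ext m
  rcases eq_or_ne m n with rfl | hm <;> simp [*]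

theorem IsFlipAt.finite_setOf_ne {R : Type*} [Ring R] {n : Site d} {w w' : Site d → R}
    (hf : IsFlipAt n w w') : {m | w m ≠ w' m}.Finite :=
  (Set.finite_singleton n).subset fun m hm => by
    by_contra hmn
    exact hm (by simp [hf.2, Function.update_of_ne hmn])

theorem mem_deltaOf_of_isHeightFn {h g : Site d → ℤ} (hh : IsHeightFn h) (hg : IsHeightFn g)
    (hfin : {n | h n ≠ g n}.Finite) :
    (Int.cast ∘ h, Int.cast ∘ g) ∈ DeltaOf (Xr d r) :=
  ⟨hh.intCast_mem_Xr, hg.intCast_mem_Xr, hfin.subset fun n hn hhg => hn (by simp [hhg])⟩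

theorem IsHeightFn.sub_emod_two_eq_zero {h g : Site d → ℤ} (hh : IsHeightFn h)
    (hg : IsHeightFn g) {q : Site d} (hq : h q = g q) (n : Site d) : (g n - h n) % 2 = 0 := by
  have hstep : ∀ m k, (g (m + unitVec k) - h (m + unitVec k)) % 2 = (g m - h m) % 2 := by
    intro m k
    have := hh.sub_eq (adjacent_comm.1 (adjacent_add_unitVec m k))
    have := hg.sub_eq (adjacent_comm.1 (adjacent_add_unitVec m k))
    omega
  rw [apply_eq_apply_of_add_unitVec (f := fun m => (g m - h m) % 2) hstep n q, hq, sub_self,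
    Int.zero_emod]

theorem IsFlipAt.sum_natAbs_sub_add_two {n : Site d} {h g g' : Site d → ℤ}
    (hf : IsFlipAt n g g') {S : Finset (Site d)} (hnS : n ∈ S) (hgap : h n + 2 ≤ g n) :
    ∑ m ∈ S, (g' m - h m).natAbs + 2 = ∑ m ∈ S, (g m - h m).natAbs := by
  have e : (fun m => (g' m - h m).natAbs) =
      Function.update (fun m => (g m - h m).natAbs) n (g n - 2 - h n).natAbs := by
    ext m; rcases eq_or_ne m n with rfl | hm <;> simp [hf.2, *]
  rw [e, Finset.sum_update_of_mem hnS, Finset.sum_eq_add_sum_sdiff_singleton_of_mem hnS]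
  omega

/-- Where `g` exceeds `h`, the highest such site is a strict local maximum of `g`. -/
theorem IsHeightFn.exists_isFlipAt {h g : Site d → ℤ} (hh : IsHeightFn h) (hg : IsHeightFn g)
    {S : Finset (Site d)} (hS : ∀ m ∉ S, h m = g m) (hlt : ∃ n, h n < g n) :
    ∃ n, h n < g n ∧ IsFlipAt n g (Function.update g n (g n - 2)) := by
  obtain ⟨n₀, hn₀⟩ := hlt
  have hmem : n₀ ∈ S.filter (fun m => h m < g m) :=
    Finset.mem_filter.2 ⟨by_contra fun h' => (hS n₀ h').not_lt hn₀, hn₀⟩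
  obtain ⟨n, hn, hmax⟩ := Finset.exists_max_image _ g ⟨n₀, hmem⟩
  refine ⟨n, (Finset.mem_filter.1 hn).2, fun m hm => ?_, rfl⟩
  have hlt := (Finset.mem_filter.1 hn).2
  rcases hg.sub_eq (adjacent_comm.1 hm) with e | e
  · have := hh.sub_eq (adjacent_comm.1 hm)
    have hm_lt : h m < g m := by omega
    have := hmax m (Finset.mem_filter.2 ⟨by_contra fun h' => (hS m h').not_lt hm_lt, hm_lt⟩)
    omega
  · omega

theorem IsHeightFn.exists_isFlipAt_sum_natAbs_lt [NeZero d] {h g : Site d → ℤ}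
    (hh : IsHeightFn h) (hg : IsHeightFn g) {S : Finset (Site d)} (hS : ∀ m ∉ S, h m = g m)
    (hlt : ∃ n, h n < g n) :
    ∃ n g', IsFlipAt n g g' ∧ IsHeightFn g' ∧ (∀ m ∉ S, h m = g' m) ∧
      ∑ m ∈ S, (g' m - h m).natAbs < ∑ m ∈ S, (g m - h m).natAbs := by
  obtain ⟨n, hn, hf⟩ := hh.exists_isFlipAt hg hS hlt
  have hnS : n ∈ S := by_contra fun h' => (hS n h').not_lt hn
  obtain ⟨q, hq⟩ := Infinite.exists_notMem_finset S
  have hpar := hh.sub_emod_two_eq_zero hg (hS q hq) n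
  refine ⟨n, _, hf, hf.isHeightFn hg, fun m hm => ?_, ?_⟩
  · rw [Function.update_of_ne (ne_of_mem_of_not_mem hnS hm).symm, hS m hm]
  · have := hf.sum_natAbs_sub_add_two (h := h) hnS (by omega)
    omega

/-- Flips connect any two height functions that differ at finitely many sites: induction on
`∑ |g - h|`, which drops by `2` when `g` is lowered at the highest site where it exceeds `h`. -/
theorem IsCocycle.apply_intCast_eq_zero [NeZero d] {C : ↥(DeltaOf (Xr d r)) → ℝ}
    (hC : IsCocycle (Xr d r) C)
    (hflip : ∀ n w w' (hww' : (w, w') ∈ DeltaOf (Xr d r)),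
      IsFlipAt n w w' → C ⟨(w, w'), hww'⟩ = 0)
    {h g : Site d → ℤ} (hh : IsHeightFn h) (hg : IsHeightFn g) (hfin : {n | h n ≠ g n}.Finite)
    (hhg : (Int.cast ∘ h, Int.cast ∘ g) ∈ DeltaOf (Xr d r)) :
    C ⟨_, hhg⟩ = 0 := by
  set S := hfin.toFinset
  have hS : ∀ m ∉ S, h m = g m := by simp [S]
  clear_value S
  clear hfin
  induction hN : ∑ m ∈ S, (g m - h m).natAbs using Nat.strong_induction_on generalizing h g with
  | _ N ih =>
  have descend : ∀ {h g : Site d → ℤ}, IsHeightFn h → IsHeightFn g →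
      (∀ m ∉ S, h m = g m) → ∑ m ∈ S, (g m - h m).natAbs = N → (∃ n, h n < g n) →
      ∀ hhg : (Int.cast ∘ h, Int.cast ∘ g) ∈ DeltaOf (Xr d r), C ⟨_, hhg⟩ = 0 := by
    intro h g hh hg hS hN hlt hhg
    obtain ⟨n, g', hf, hg', hS', hlt'⟩ := hh.exists_isFlipAt_sum_natAbs_lt hg hS hlt
    have hhg' := mem_deltaOf_of_isHeightFn (r := r) hh hg'
      (S.finite_toSet.subset fun m hm => by_contra fun h' => hm (hS' m h'))
    have hgg' := mem_deltaOf_of_isHeightFn (r := r) hg hg' hf.finite_setOf_ne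
    have := hC _ _ _ hhg' (swap_mem_deltaOf hgg') hhg
    rw [hC.apply_swap hgg', hflip _ _ _ hgg' hf.intCast, ih _ (hN ▸ hlt') hh hg' hhg' hS' rfl]
      at this
    linarith
  by_cases heq : ∀ n, h n = g n
  · obtain rfl : h = g := funext heq
    exact hC.apply_self hhg
  obtain ⟨n, hn⟩ := not_forall.1 heq
  rcases Ne.lt_or_gt hn with hlt | hgt
  · exact descend hh hg hS hN ⟨n, hlt⟩ hhg
  · have := descend hg hh (fun m hm => (hS m hm).symm)
      (by rw [← hN]; exact Finset.sum_congr rfl fun m _ => by omega) ⟨n, hgt⟩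
      (swap_mem_deltaOf hhg)
    rwa [hC.apply_swap, neg_eq_zero] at this

theorem IsCocycle.eq_zero_of_isFlipAt (hd : 2 ≤ d) (hr3 : 3 ≤ r) (hr4 : r ≠ 4)
    {C : ↥(DeltaOf (Xr d r)) → ℝ} (hC : IsCocycle (Xr d r) C)
    (hflip : ∀ n w w' (hww' : (w, w') ∈ DeltaOf (Xr d r)),
      IsFlipAt n w w' → C ⟨(w, w'), hww'⟩ = 0)
    (p : ↥(DeltaOf (Xr d r))) : C p = 0 := by
  have : NeZero d := ⟨by omega⟩
  obtain ⟨⟨x, y⟩, hxy⟩ := p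
  obtain ⟨h, hh⟩ := exists_liftsTo hr3 hr4 hxy.1
  obtain ⟨g, hg, hfin⟩ := hh.exists_liftsTo_of_mem_deltaOf hd hr3 hr4 hxy
  obtain rfl := hh.intCast_comp
  obtain rfl := hg.intCast_comp
  exact hC.apply_intCast_eq_zero hflip hh.1 hg.1 hfin hxy

theorem exists_isFlipAt_isHeightFn (n : Site d) (k : ℤ) :
    ∃ g g' : Site d → ℤ, IsHeightFn g ∧ IsFlipAt n g g' ∧ g n = k := by
  -- a checkerboard of heights `k` and `k - 1`
  set g : Site d → ℤ := fun m => k - (∑ i, m i - ∑ i, n i) % 2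
  have hg : IsHeightFn g := isHeightFn_iff.2 fun m j => by
    simp only [g, sum_add_unitVec]
    rw [abs_eq zero_le_one]
    omega
  have hgn : g n = k := by simp [g]
  refine ⟨g, _, hg, ⟨fun m hm => ?_, rfl⟩, hgn⟩
  have := hg.sub_eq hm
  simp only [g] at this ⊢
  omega

theorem exists_isFlipAt (n : Site d) (c : ZMod r) :
    ∃ p : ↥(DeltaOf (Xr d r)), IsFlipAt n p.1.1 p.1.2 ∧ p.1.1 n = c := by
  obtain ⟨k, rfl⟩ := ZMod.intCast_surjective c
  obtain ⟨g, g', hg, hf, hgn⟩ := exists_isFlipAt_isHeightFn n k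
  exact ⟨⟨_, mem_deltaOf_of_isHeightFn hg (hf.isHeightFn hg) hf.finite_setOf_ne⟩, hf.intCast,
    by simp [hgn]⟩

/-- By the Markov property, the common value of `M` on all flips at `n` from height `c`. -/
noncomputable def flipCost (M : ↥(DeltaOf (Xr d r)) → ℝ) (n : Site d) (c : ZMod r) : ℝ :=
  M (exists_isFlipAt n c).choose

theorem IsMarkovProp.apply_eq_of_isFlipAt {R : Type*} [Ring R] {X : Set (Site d → R)}
    {M : ↥(DeltaOf X) → ℝ} (hM : IsMarkovProp X M) {n : Site d} {w w' v v' : Site d → R}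
    (hw : IsFlipAt n w w') (hv : IsFlipAt n v v') (hwv : w n = v n) (hww' : (w, w') ∈ DeltaOf X)
    (hvv' : (v, v') ∈ DeltaOf X) : M ⟨(w, w'), hww'⟩ = M ⟨(v, v'), hvv'⟩ := by
  obtain ⟨hwnb, rfl⟩ := hw
  obtain ⟨hvnb, rfl⟩ := hv
  have hbdry : ∀ m ∈ siteBdry {n}, m ≠ n ∧ adjacent n m := by
    rintro m ⟨hm, p, rfl, hpm⟩
    exact ⟨hm, hpm⟩
  apply hM _ _ _ _ hww' hvv' {n} (Set.finite_singleton n)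
  · intro m hm; simp [Function.update_of_ne (Set.mem_singleton_iff.not.1 hm)]
  · intro m hm; simp [Function.update_of_ne (Set.mem_singleton_iff.not.1 hm)]
  · rintro m (rfl | hm)
    · exact hwv
    · obtain ⟨hmn, hnm⟩ := hbdry m hm
      rw [hwnb m hnm, hvnb m hnm, hwv]
  · rintro m (rfl | hm)
    · simp [hwv]
    · obtain ⟨hmn, hnm⟩ := hbdry m hm
      simp [Function.update_of_ne hmn, hwnb m hnm, hvnb m hnm, hwv]

theorem IsMarkovProp.apply_isFlipAt {M : ↥(DeltaOf (Xr d r)) → ℝ}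
    (hM : IsMarkovProp (Xr d r) M) {n : Site d} {w w' : Site d → ZMod r} (hw : IsFlipAt n w w')
    (hww' : (w, w') ∈ DeltaOf (Xr d r)) : M ⟨(w, w'), hww'⟩ = flipCost M n (w n) := by
  obtain ⟨hflip, hn⟩ := (exists_isFlipAt n (w n)).choose_spec
  exact hM.apply_eq_of_isFlipAt hw hflip hn.symm hww' _

theorem gibbsDiff_add {fv : Site d → ZMod r → ℝ}
    {fe : Site d → Fin d → ZMod r → ZMod r → ℝ}
    {x y z : Site d → ZMod r} (hxy : {n | x n ≠ y n}.Finite) (hyz : {n | y n ≠ z n}.Finite) :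
    gibbsDiff fv fe x z = gibbsDiff fv fe x y + gibbsDiff fv fe y z := by
  have hvert : ∀ {x y : Site d → ZMod r}, {n | x n ≠ y n}.Finite →
      (Function.support fun n => fv n (y n) - fv n (x n)).Finite :=
    fun hxy => hxy.subset fun n hn hxy' => hn (by simp [hxy'])
  have hedge : ∀ {x y : Site d → ZMod r}, {n | x n ≠ y n}.Finite →
      (Function.support fun n => ∑ j : Fin d,
        (fe n j (y n) (y (n + unitVec j)) - fe n j (x n) (x (n + unitVec j)))).Finite := by
    intro x y hxy
    refine (hxy.union (Set.finite_iUnion fun j =>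
      hxy.preimage (add_left_injective (unitVec j)).injOn)).subset fun n hn => ?_
    by_contra hout
    simp only [Set.mem_union, Set.mem_iUnion, Set.mem_preimage, Set.mem_ofPred_eq, not_or,
      not_exists, not_not] at hout
    exact hn (Finset.sum_eq_zero fun j _ => by rw [hout.1, hout.2 j, sub_self])
  unfold gibbsDiff
  rw [add_add_add_comm, ← finsum_add_distrib (hvert hxy) (hvert hyz),
    ← finsum_add_distrib (hedge hxy) (hedge hyz)]
  congr 1 <;> refine finsum_congr fun n => ?_
  · ring
  · rw [← Finset.sum_add_distrib]
    exact Finset.sum_congr rfl fun j _ => by ring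

theorem isCocycle_gibbsDiff {X : Set (Site d → ZMod r)} (fv : Site d → ZMod r → ℝ)
    (fe : Site d → Fin d → ZMod r → ZMod r → ℝ) :
    IsCocycle X (fun p => gibbsDiff fv fe p.1.1 p.1.2) :=
  fun _ _ _ hxy hyz _ => gibbsDiff_add hxy.2.2 hyz.2.2

def directionalInteraction (j : Fin d) (E : Site d → ZMod r → ZMod r → ℝ) :
    Site d → Fin d → ZMod r → ZMod r → ℝ :=
  fun m k a b => if k = j then E m a b else 0

theorem gibbsDiff_directionalInteraction_update (j : Fin d)
    (E : Site d → ZMod r → ZMod r → ℝ) (w : Site d → ZMod r) (n : Site d) (a : ZMod r) :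
    gibbsDiff 0 (directionalInteraction j E) w (Function.update w n a) =
      (E n a (w (n + unitVec j)) - E n (w n) (w (n + unitVec j))) +
      (E (n - unitVec j) (w (n - unitVec j)) a - E (n - unitVec j) (w (n - unitVec j)) (w n)) := by
  have hne : n - unitVec j ≠ n := by simp [unitVec]
  have hne' : n + unitVec j ≠ n := by simp [unitVec]
  simp only [gibbsDiff, directionalInteraction, Pi.zero_apply, sub_self, finsum_zero, zero_add]
  rw [finsum_eq_sum_of_support_subset _ (s := {n, n - unitVec j}) ?_, Finset.sum_pair hne.symm]
  · simp [hne, hne', Function.update_of_ne]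
  · intro m hm
    by_contra hmn
    simp only [Finset.coe_insert, Finset.coe_singleton, Set.mem_insert_iff,
      Set.mem_singleton_iff, not_or] at hmn
    have hm' : m + unitVec j ≠ n := fun h => hmn.2 (by rw [← h, add_sub_cancel_right])
    refine hm (Finset.sum_eq_zero fun k _ => ?_)
    rcases eq_or_ne k j with rfl | hk
    · simp [Function.update_of_ne hmn.1, Function.update_of_ne hm']
    · simp [hk]

/-- `b` stands for value plus `j`-th coordinate: it is the same on the two edges of direction `j`
that a flip at `n` switches, so that flip costs telescope along lines. -/
noncomputable def flipPotential (M : ↥(DeltaOf (Xr d r)) → ℝ) (j : Fin d) (n : Site d)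
    (b : ZMod r) : ℝ :=
  linePrimitive j (fun m => flipCost M (m + unitVec j) (b - m j + 1)) n

theorem flipPotential_sub (M : ↥(DeltaOf (Xr d r)) → ℝ) (j : Fin d) (n : Site d)
    (b : ZMod r) :
    flipPotential M j n b - flipPotential M j (n - unitVec j) b = flipCost M n (b - n j + 2) := by
  have := linePrimitive_add_unitVec_self j (fun m => flipCost M (m + unitVec j) (b - m j + 1))
    (n - unitVec j)
  rw [sub_add_cancel] at this
  rw [flipPotential, flipPotential, this, add_sub_cancel_left]
  congr 1
  simp [unitVec]
  ring

noncomputable def flipEdgeWeight (M : ↥(DeltaOf (Xr d r)) → ℝ) (j : Fin d) (m : Site d)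
    (a b : ZMod r) : ℝ :=
  if b = a + 1 then flipPotential M j m (a + m j) else 0

theorem gibbsDiff_flipEdgeWeight (hr3 : 3 ≤ r) (M : ↥(DeltaOf (Xr d r)) → ℝ) (j : Fin d)
    {n : Site d} {w w' : Site d → ZMod r} (hw : IsFlipAt n w w') :
    gibbsDiff 0 (directionalInteraction j (flipEdgeWeight M j)) w w' = flipCost M n (w n) := by
  obtain ⟨hnb, rfl⟩ := hw
  have hup := hnb _ (adjacent_add_unitVec n j)
  have hdown := hnb _ (adjacent_comm.1 (by simpa using adjacent_add_unitVec (n - unitVec j) j))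
  have h2 : ((2 : ℕ) : ZMod r) ≠ 0 := by
    rw [Ne, ZMod.natCast_eq_zero_iff]
    exact fun h => absurd (Nat.le_of_dvd two_pos h) (by omega)
  push_cast at h2
  have hstep : w n - 1 = w n - 2 + 1 := by ring
  have hnstep : w n - 1 ≠ w n + 1 := fun h => h2 (by linear_combination -h)
  have hnstep' : w n - 2 ≠ w n := fun h => h2 (by linear_combination -h)
  rw [gibbsDiff_directionalInteraction_update]
  simp only [flipEdgeWeight, hup, hdown, if_pos hstep, if_neg hnstep, if_neg hnstep',
    sub_add_cancel, if_true]
  rw [show w n - 1 + ((n - unitVec j) j : ZMod r) = w n - 2 + n j by simp [unitVec]; ring,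
    sub_zero, zero_sub, ← sub_eq_add_neg, flipPotential_sub]
  congr 1
  ring

end

/-- For `d ≥ 2`, `r ∉ {1,2,4}`: every Markov cocycle on `X_r`
(not assumed shift-invariant) is the Gibbs cocycle of some nearest neighbor interaction
(not necessarily shift-invariant): `M_{X_r} = G_{X_r}`. -/
theorem markov_cocycles_Xr_are_gibbs
    (d r : ℕ) (hd : 2 ≤ d) (hr0 : 0 < r) (hr1 : r ≠ 1) (hr2 : r ≠ 2) (hr4 : r ≠ 4)
    (M : ↥(DeltaOf (Xr d r)) → ℝ)
    (hM : IsCocycle (Xr d r) M ∧ IsMarkovProp (Xr d r) M) :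
    ∃ (fv : Site d → ZMod r → ℝ) (fe : Site d → Fin d → ZMod r → ZMod r → ℝ),
      ∀ p : ↥(DeltaOf (Xr d r)), M p = gibbsDiff fv fe p.val.1 p.val.2 := by
  obtain ⟨hcocycle, hmarkov⟩ := hM
  have hr3 : 3 ≤ r := by omega
  let j : Fin d := ⟨0, by omega⟩
  refine ⟨0, directionalInteraction j (flipEdgeWeight M j), fun p => sub_eq_zero.1 ?_⟩
  refine (hcocycle.sub (isCocycle_gibbsDiff _ _)).eq_zero_of_isFlipAt hd hr3 hr4
    (fun n w w' hww' hw => ?_) p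
  simp [hmarkov.apply_isFlipAt hw, gibbsDiff_flipEdgeWeight hr3 M j hw]
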